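/- (Poincaré inequality on a cylinder.) Let Ω = U × ω where U ⊂ ℝ is open and ω ⊂ ℝ^{n−1} is a bounded open set, and let V(Ω) = {u ∈ W^{1,p}(Ω) : u = 0 on U × ∂ω}. Then there is a constant C_p > 0 depending only on p and ω such that for every u ∈ V(Ω), ‖u‖_{L^p(Ω)} ≤ C_p ‖∇u‖_{L^p(Ω)}. In particular the constant is independent of U. -/

import Mathlib

open MeasureTheory Set Filter Topology

noncomputable section

/-- The cross-section space `ℝ^{n-1}` (so the full space is `ℝ × Ed d ≅ ℝⁿ`, `n = d+1`). -/
abbrev Ed (d : ℕ) := EuclideanSpace ℝ (Fin d)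

variable {d : ℕ}

/-- Euclidean inner product on `ℝ × ℝ^{n-1} ≅ ℝⁿ`. -/
def vdot (v w : ℝ × Ed d) : ℝ := v.1 * w.1 + (inner ℝ v.2 w.2 : ℝ)

/-- Euclidean norm on `ℝ × ℝ^{n-1} ≅ ℝⁿ`. -/
def vnorm (v : ℝ × Ed d) : ℝ := Real.sqrt (v.1 ^ 2 + ‖v.2‖ ^ 2)

/-- Full gradient `∇u = (∂₁u, ∇_{X₂}u)` of `u : ℝ × ℝ^{n-1} → ℝ`. -/
def grad (u : ℝ × Ed d → ℝ) (x : ℝ × Ed d) : ℝ × Ed d :=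
  (deriv (fun t => u (t, x.2)) x.1, gradient (fun y => u (x.1, y)) x.2)

/-- The lower-right `(n-1)×(n-1)` block `A₂₂` of `A`, acting on cross-section vectors. -/
def A22 (A : Ed d → (ℝ × Ed d) →ₗ[ℝ] (ℝ × Ed d)) (y : Ed d) (w : Ed d) : Ed d :=
  (A y ((0 : ℝ), w)).2

/-- The row `A₁₂` of `A` applied to a cross-section vector: `A₁₂ · w`. -/
def A12dot (A : Ed d → (ℝ × Ed d) →ₗ[ℝ] (ℝ × Ed d)) (y : Ed d) (w : Ed d) : ℝ :=
  (A y ((0 : ℝ), w)).1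

/-- Uniform ellipticity: `A(X₂)ξ·ξ ≥ λ|ξ|²`. -/
def UniformlyElliptic (A : Ed d → (ℝ × Ed d) →ₗ[ℝ] (ℝ × Ed d)) (ω : Set (Ed d)) (lam : ℝ) :
    Prop :=
  ∀ y ∈ ω, ∀ v : ℝ × Ed d, lam * vnorm v ^ 2 ≤ vdot (A y v) v

/-- Uniform boundedness: `‖A(X₂)‖ ≤ C`. -/
def UniformlyBounded (A : Ed d → (ℝ × Ed d) →ₗ[ℝ] (ℝ × Ed d)) (ω : Set (Ed d)) (C : ℝ) :
    Prop :=
  ∀ y ∈ ω, ∀ v : ℝ × Ed d, vnorm (A y v) ≤ C * vnorm v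

/-- `A(X₂)` is a symmetric matrix. -/
def SymmetricMatrix (A : Ed d → (ℝ × Ed d) →ₗ[ℝ] (ℝ × Ed d)) (ω : Set (Ed d)) : Prop :=
  ∀ y ∈ ω, ∀ v w : ℝ × Ed d, vdot (A y v) w = vdot v (A y w)

/-- The entries of `A` are measurable functions of `X₂`. -/
def MeasurableEntries (A : Ed d → (ℝ × Ed d) →ₗ[ℝ] (ℝ × Ed d)) : Prop :=
  ∀ v : ℝ × Ed d, Measurable fun y => A y v

/-- Membership in (an idealized) `W^{1,p}(Ω)`. -/
def MemW1p (p : ℝ) (Ω : Set (ℝ × Ed d)) (u : ℝ × Ed d → ℝ) : Prop :=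
  ContinuousOn u (closure Ω) ∧ (∀ x ∈ Ω, DifferentiableAt ℝ u x) ∧
  MemLp u (ENNReal.ofReal p) (volume.restrict Ω) ∧
  MemLp (fun x => vnorm (grad u x)) (ENNReal.ofReal p) (volume.restrict Ω)

/-- Membership in `V(Ω) = {u ∈ W^{1,p}(Ω) : u = 0 on γ}`. -/
def MemV (p : ℝ) (Ω γ : Set (ℝ × Ed d)) (u : ℝ × Ed d → ℝ) : Prop :=
  MemW1p p Ω u ∧ ∀ x ∈ γ, u x = 0

/-- Energy `∫_Ω |A∇u·∇u|^{p/2}`. -/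
def energy (A : Ed d → (ℝ × Ed d) →ₗ[ℝ] (ℝ × Ed d)) (p : ℝ) (Ω : Set (ℝ × Ed d))
    (u : ℝ × Ed d → ℝ) : ℝ :=
  ∫ x in Ω, |vdot (A x.2 (grad u x)) (grad u x)| ^ (p / 2)

/-- Mass `∫_Ω |u|^p`. -/
def lpmass (p : ℝ) (Ω : Set (ℝ × Ed d)) (u : ℝ × Ed d → ℝ) : ℝ := ∫ x in Ω, |u x| ^ p

/-- The cylinder `Ω_ℓ = (-ℓ,ℓ) × ω`. -/
def OmL (ω : Set (Ed d)) (ℓ : ℝ) : Set (ℝ × Ed d) := Ioo (-ℓ) ℓ ×ˢ ω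

/-- The lateral boundary `γ_ℓ = (-ℓ,ℓ) × ∂ω`. -/
def gammaL (ω : Set (Ed d)) (ℓ : ℝ) : Set (ℝ × Ed d) := Ioo (-ℓ) ℓ ×ˢ frontier ω

/-- The semi-infinite cylinder `Ω_∞⁺ = (0,∞) × ω`. -/
def OmPinf (ω : Set (Ed d)) : Set (ℝ × Ed d) := Ioi (0 : ℝ) ×ˢ ω

/-- Its lateral boundary `γ_∞⁺ = (0,∞) × ∂ω`. -/
def gammaPinf (ω : Set (Ed d)) : Set (ℝ × Ed d) := Ioi (0 : ℝ) ×ˢ frontier ω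

/-- The semi-infinite cylinder `Ω_∞⁻ = (-∞,0) × ω`. -/
def OmMinf (ω : Set (Ed d)) : Set (ℝ × Ed d) := Iio (0 : ℝ) ×ˢ ω

/-- Its lateral boundary `γ_∞⁻ = (-∞,0) × ∂ω`. -/
def gammaMinf (ω : Set (Ed d)) : Set (ℝ × Ed d) := Iio (0 : ℝ) ×ˢ frontier ω

/-- The half cylinder `Ω_ℓ⁺ = (0,ℓ) × ω`. -/
def OmP (ω : Set (Ed d)) (ℓ : ℝ) : Set (ℝ × Ed d) := Ioo (0 : ℝ) ℓ ×ˢ ω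

/-- The half cylinder `Ω_ℓ⁻ = (-ℓ,0) × ω`. -/
def OmM (ω : Set (Ed d)) (ℓ : ℝ) : Set (ℝ × Ed d) := Ioo (-ℓ) (0 : ℝ) ×ˢ ω

/-- Set of Rayleigh quotients over `0 ≠ u ∈ V(Ω)`. -/
def rayleighSet (A : Ed d → (ℝ × Ed d) →ₗ[ℝ] (ℝ × Ed d)) (p : ℝ)
    (Ω γ : Set (ℝ × Ed d)) : Set ℝ :=
  { r | ∃ u : ℝ × Ed d → ℝ, MemV p Ω γ u ∧ 0 < lpmass p Ω u ∧
      r = energy A p Ω u / lpmass p Ω u }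

/-- First eigenvalue `λ_M¹(Ω_ℓ)` of the mixed problem. -/
def lambdaM1 (A : Ed d → (ℝ × Ed d) →ₗ[ℝ] (ℝ × Ed d)) (p : ℝ) (ω : Set (Ed d)) (ℓ : ℝ) : ℝ :=
  sInf (rayleighSet A p (OmL ω ℓ) (gammaL ω ℓ))

/-- `ν_∞⁺`. -/
def nuP (A : Ed d → (ℝ × Ed d) →ₗ[ℝ] (ℝ × Ed d)) (p : ℝ) (ω : Set (Ed d)) : ℝ :=
  sInf (rayleighSet A p (OmPinf ω) (gammaPinf ω))

/-- `ν_∞⁻`. -/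
def nuM (A : Ed d → (ℝ × Ed d) →ₗ[ℝ] (ℝ × Ed d)) (p : ℝ) (ω : Set (Ed d)) : ℝ :=
  sInf (rayleighSet A p (OmMinf ω) (gammaMinf ω))

/-- Membership in (an idealized) `W₀^{1,p}(ω)` on the cross-section. -/
def MemW01p (p : ℝ) (ω : Set (Ed d)) (w : Ed d → ℝ) : Prop :=
  ContinuousOn w (closure ω) ∧ (∀ y ∈ ω, DifferentiableAt ℝ w y) ∧
  MemLp w (ENNReal.ofReal p) (volume.restrict ω) ∧
  MemLp (fun y => ‖gradient w y‖) (ENNReal.ofReal p) (volume.restrict ω) ∧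
  (∀ y ∈ frontier ω, w y = 0)

/-- Cross-sectional energy `∫_ω |A₂₂∇w·∇w|^{p/2}`. -/
def energyCS (A : Ed d → (ℝ × Ed d) →ₗ[ℝ] (ℝ × Ed d)) (p : ℝ) (ω : Set (Ed d))
    (w : Ed d → ℝ) : ℝ :=
  ∫ y in ω, |(inner ℝ (A22 A y (gradient w y)) (gradient w y) : ℝ)| ^ (p / 2)

/-- Cross-sectional mass `∫_ω |w|^p`. -/
def massCS (p : ℝ) (ω : Set (Ed d)) (w : Ed d → ℝ) : ℝ := ∫ y in ω, |w y| ^ p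

/-- First eigenvalue `μ¹(ω)` of the cross-section problem. -/
def muOne (A : Ed d → (ℝ × Ed d) →ₗ[ℝ] (ℝ × Ed d)) (p : ℝ) (ω : Set (Ed d)) : ℝ :=
  sInf { r | ∃ w : Ed d → ℝ, MemW01p p ω w ∧ 0 < massCS p ω w ∧
      r = energyCS A p ω w / massCS p ω w }

/-- `u` is the positive normalized first eigenfunction of the mixed problem on `Ω_ℓ`. -/
def IsFirstEigenfunction (A : Ed d → (ℝ × Ed d) →ₗ[ℝ] (ℝ × Ed d)) (p : ℝ) (ω : Set (Ed d))
    (ℓ : ℝ) (u : ℝ × Ed d → ℝ) : Prop :=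
  MemV p (OmL ω ℓ) (gammaL ω ℓ) u ∧ (∀ x ∈ OmL ω ℓ, 0 < u x) ∧
  lpmass p (OmL ω ℓ) u = 1 ∧ energy A p (OmL ω ℓ) u = lambdaM1 A p ω ℓ

/-- `W` is the nonnegative normalized first eigenfunction of the cross-section problem. -/
def IsCrossSectionEigenfunction (A : Ed d → (ℝ × Ed d) →ₗ[ℝ] (ℝ × Ed d)) (p : ℝ)
    (ω : Set (Ed d)) (W : Ed d → ℝ) : Prop :=
  MemW01p p ω W ∧ (∀ y ∈ ω, 0 ≤ W y) ∧ massCS p ω W = 1 ∧ energyCS A p ω W = muOne A p ω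

/-- `λ̃_M¹(Ω_ℓ⁺)`: Dirichlet on `γ_ℓ⁺ ∪ Γ_ℓ⁺`, Neumann at `{0}×ω`. -/
def tlamP (A : Ed d → (ℝ × Ed d) →ₗ[ℝ] (ℝ × Ed d)) (p : ℝ) (ω : Set (Ed d)) (ℓ : ℝ) : ℝ :=
  sInf { r | ∃ u : ℝ × Ed d → ℝ, MemW1p p (OmP ω ℓ) u ∧
      (∀ x ∈ (Ioo (0 : ℝ) ℓ ×ˢ frontier ω) ∪ (({ℓ} : Set ℝ) ×ˢ ω), u x = 0) ∧
      lpmass p (OmP ω ℓ) u = 1 ∧ r = energy A p (OmP ω ℓ) u }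

/-- `λ̃_M¹(Ω_ℓ⁻)`: Dirichlet on `γ_ℓ⁻ ∪ Γ_ℓ⁻`, Neumann at `{0}×ω`. -/
def tlamM (A : Ed d → (ℝ × Ed d) →ₗ[ℝ] (ℝ × Ed d)) (p : ℝ) (ω : Set (Ed d)) (ℓ : ℝ) : ℝ :=
  sInf { r | ∃ u : ℝ × Ed d → ℝ, MemW1p p (OmM ω ℓ) u ∧
      (∀ x ∈ (Ioo (-ℓ) (0 : ℝ) ×ˢ frontier ω) ∪ (({-ℓ} : Set ℝ) ×ˢ ω), u x = 0) ∧
      lpmass p (OmM ω ℓ) u = 1 ∧ r = energy A p (OmM ω ℓ) u }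

/-- Courant–Fischer `k`-th eigenvalue of the mixed problem for `p = 2`. -/
def lambdaMk (A : Ed d → (ℝ × Ed d) →ₗ[ℝ] (ℝ × Ed d)) (ω : Set (Ed d)) (k : ℕ) (ℓ : ℝ) : ℝ :=
  sInf { r | ∃ V : Submodule ℝ ((ℝ × Ed d) → ℝ),
      Module.finrank ℝ V = k ∧ (∀ u ∈ V, MemV 2 (OmL ω ℓ) (gammaL ω ℓ) u) ∧
      r = sSup { e | ∃ u ∈ V, lpmass 2 (OmL ω ℓ) u = 1 ∧ e = energy A 2 (OmL ω ℓ) u } }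

/-- `W^{1,p}(Ω)`-distance of two functions. -/
def W1pdist (p : ℝ) (Ω : Set (ℝ × Ed d)) (u v : (ℝ × Ed d) → ℝ) : ℝ :=
  (∫ x in Ω, (|u x - v x| ^ p + vnorm (grad (fun z => u z - v z) x) ^ p)) ^ (1 / p)

/-- The manifold `M_ℓ = {u ∈ V(Ω) : ∫_Ω |u|^p = 1}`. -/
def sphereM (p : ℝ) (Ω γ : Set (ℝ × Ed d)) : Set ((ℝ × Ed d) → ℝ) :=
  { u | MemV p Ω γ u ∧ lpmass p Ω u = 1 }

/-- `K` is symmetric: `K = -K`. -/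
def SymmetricSet (K : Set ((ℝ × Ed d) → ℝ)) : Prop := ∀ u ∈ K, -u ∈ K

/-- `K ⊆ M` is closed in `M` for the `W^{1,p}` topology. -/
def ClosedInM (p : ℝ) (Ω : Set (ℝ × Ed d)) (M K : Set ((ℝ × Ed d) → ℝ)) : Prop :=
  K ⊆ M ∧ ∀ u ∈ M, (∀ ε > 0, ∃ v ∈ K, W1pdist p Ω u v < ε) → u ∈ K

/-- There is an odd, `W^{1,p}`-continuous, nonvanishing map `h : K → ℝ^m \ {0}`. -/
def HasOddMap (p : ℝ) (Ω : Set (ℝ × Ed d)) (K : Set ((ℝ × Ed d) → ℝ)) (m : ℕ) : Prop :=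
  ∃ h : ((ℝ × Ed d) → ℝ) → EuclideanSpace ℝ (Fin m),
    (∀ u ∈ K, h u ≠ 0) ∧ (∀ u ∈ K, h (-u) = -h u) ∧
    (∀ u ∈ K, ∀ ε > 0, ∃ δ > 0, ∀ v ∈ K, W1pdist p Ω u v < δ → ‖h u - h v‖ < ε)

/-- The Krasnoselskii genus of `K` is at least `k`. -/
def GenusGE (p : ℝ) (Ω : Set (ℝ × Ed d)) (K : Set ((ℝ × Ed d) → ℝ)) (k : ℕ) : Prop :=
  ∀ m : ℕ, m < k → ¬ HasOddMap p Ω K m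

/-- The `k`-th Krasnoselskii eigenvalue `β_k(Ω_ℓ)`. -/
def betaK (A : Ed d → (ℝ × Ed d) →ₗ[ℝ] (ℝ × Ed d)) (p : ℝ) (ω : Set (Ed d)) (ℓ : ℝ)
    (k : ℕ) : ℝ :=
  sInf { r | ∃ K : Set ((ℝ × Ed d) → ℝ),
      ClosedInM p (OmL ω ℓ) (sphereM p (OmL ω ℓ) (gammaL ω ℓ)) K ∧ SymmetricSet K ∧
      GenusGE p (OmL ω ℓ) K k ∧
      r = sSup { e | ∃ u ∈ K, e = energy A p (OmL ω ℓ) u } }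

/-! On a cross-section `{t} × ω` the function `w = u(t, ·)` vanishes on `∂ω`, and `ω` lies in a
slab `|y₀| < R`. Starting from `y ∈ ω` and moving backwards along the `y₀`-axis, the line leaves `ω`
at a last exit point of `∂ω`, where `w = 0`. The fundamental theorem of calculus and Hölder's
inequality on that segment give `|w(y)|^p ≤ (2R)^(p-1) ∫ |∇w|^p` along the line, and integrating
over the line and the remaining coordinates (Tonelli) gives `‖w‖_p ≤ 2R ‖∇w‖_p` on `ω`.
Integrating these cross-sectional inequalities over `t ∈ U` yields the theorem with `C = 2R`,
which does not see `U`. -/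

open scoped ENNReal

theorem enorm_rpow_le_mul_lintegral_enorm_deriv_rpow {g : ℝ → ℝ} {a b p : ℝ} (hp : 1 ≤ p)
    (hab : a < b) (hgc : ContinuousOn g (Icc a b))
    (hgd : ∀ s ∈ Ioo a b, DifferentiableAt ℝ g s) (hga : g a = 0) :
    ‖g b‖ₑ ^ p ≤ ENNReal.ofReal (b - a) ^ (p - 1) * ∫⁻ s in Ioo a b, ‖deriv g s‖ₑ ^ p := by
  have hp0 : 0 < p := by linarith
  have hlen : (volume.restrict (Ioo a b)) univ = ENNReal.ofReal (b - a) := by simp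
  by_cases htop : ∫⁻ s in Ioo a b, ‖deriv g s‖ₑ ^ p = ∞
  · rw [htop, ENNReal.mul_top (by simp [hab])]
    exact le_top
  have hHolder : ∫⁻ s in Ioo a b, ‖deriv g s‖ₑ ≤
      (∫⁻ s in Ioo a b, ‖deriv g s‖ₑ ^ p) ^ (1 / p) * ENNReal.ofReal (b - a) ^ (1 - 1 / p) := by
    simpa [eLpNorm'_eq_lintegral_enorm, hlen] using
      eLpNorm'_le_eLpNorm'_mul_rpow_measure_univ one_pos hp
        (μ := volume.restrict (Ioo a b)) (measurable_deriv g).aestronglyMeasurable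
  have hint : IntegrableOn (deriv g) (Ioo a b) :=
    ⟨(measurable_deriv g).aestronglyMeasurable, hHolder.trans_lt (ENNReal.mul_lt_top
      (ENNReal.rpow_lt_top_of_nonneg (by positivity) htop)
      (ENNReal.rpow_lt_top_of_nonneg (sub_nonneg.2 ((div_le_one hp0).2 hp))
        ENNReal.ofReal_ne_top))⟩
  have hftc : g b = ∫ s in Ioo a b, deriv g s := by
    rw [← integral_Ioc_eq_integral_Ioo, ← intervalIntegral.integral_of_le hab.le,
      intervalIntegral.integral_eq_sub_of_hasDerivAt_of_le hab.le hgc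
        (fun s hs => (hgd s hs).hasDerivAt)
        ((intervalIntegrable_iff_integrableOn_Ioo_of_le hab.le).2 hint), hga, sub_zero]
  calc ‖g b‖ₑ ^ p
      ≤ ((∫⁻ s in Ioo a b, ‖deriv g s‖ₑ ^ p) ^ (1 / p) *
          ENNReal.ofReal (b - a) ^ (1 - 1 / p)) ^ p := by
        gcongr
        rw [hftc]
        exact (enorm_integral_le_lintegral_enorm _).trans hHolder
    _ = ENNReal.ofReal (b - a) ^ (p - 1) * ∫⁻ s in Ioo a b, ‖deriv g s‖ₑ ^ p := by
        rw [ENNReal.mul_rpow_of_nonneg _ _ hp0.le, ← ENNReal.rpow_mul, ← ENNReal.rpow_mul,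
          one_div_mul_cancel hp0.ne', ENNReal.rpow_one, mul_comm]
        congr 2
        field_simp

theorem exists_mem_frontier_mapsTo_Ioc {X : Type*} [TopologicalSpace X] {γ : ℝ → X}
    (hγ : Continuous γ) {ω : Set X} (hω : IsOpen ω) {a t : ℝ} (ha : γ a ∉ ω) (ht : γ t ∈ ω)
    (hat : a ≤ t) : ∃ c ∈ Ico a t, γ c ∈ frontier ω ∧ MapsTo γ (Ioc c t) ω := by
  set S := Icc a t ∩ γ ⁻¹' ωᶜ
  have hS : IsCompact S := isCompact_Icc.inter_right (hω.isClosed_compl.preimage hγ)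
  have hSne : S.Nonempty := ⟨a, ⟨le_rfl, hat⟩, ha⟩
  obtain ⟨⟨hac, hct⟩, hcω⟩ := hS.sSup_mem hSne
  set c := sSup S
  have hmaps : MapsTo γ (Ioc c t) ω := fun s ⟨hcs, hst⟩ => by
    by_contra hs
    exact (le_csSup hS.bddAbove ⟨⟨hac.trans hcs.le, hst⟩, hs⟩).not_gt hcs
  have hct' : c < t := lt_of_le_of_ne hct fun h => hcω (h ▸ ht)
  refine ⟨c, ⟨hac, hct'⟩, ?_, hmaps⟩
  rw [hω.frontier_eq]
  refine ⟨mem_closure_of_tendsto (hγ.continuousWithinAt (s := Ioi c) (x := c)) ?_, hcω⟩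
  filter_upwards [Ioc_mem_nhdsGT hct'] with s hs using hmaps hs

theorem enorm_rpow_le_lintegral_fderiv_along_line {E : Type*} [NormedAddCommGroup E]
    [NormedSpace ℝ E] {p : ℝ} (hp : 1 ≤ p) {ω : Set E} (hω : IsOpen ω) {w : E → ℝ}
    (hwc : ContinuousOn w (closure ω)) (hwd : ∀ y ∈ ω, DifferentiableAt ℝ w y)
    (hw0 : ∀ y ∈ frontier ω, w y = 0) {x e : E} (he : ‖e‖ ≤ 1) {a b t : ℝ}
    (ha : x + a • e ∉ ω) (ht : x + t • e ∈ ω) (hat : a ≤ t) (htb : t ≤ b) :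
    ‖w (x + t • e)‖ₑ ^ p ≤ ENNReal.ofReal (b - a) ^ (p - 1) *
      ∫⁻ s in Ioo a b, ω.indicator (fun y => ‖fderiv ℝ w y‖ₑ ^ p) (x + s • e) := by
  set γ : ℝ → E := fun s => x + s • e
  obtain ⟨c, ⟨hac, hct⟩, hcω, hmaps⟩ :=
    exists_mem_frontier_mapsTo_Ioc (γ := γ) (by fun_prop) hω ha ht hat
  have hγ' : ∀ s, HasDerivAt γ e s := fun s => by
    simpa [γ] using (hasDerivAt_id s).smul_const e
  have hderiv : ∀ s ∈ Ioo c t, HasDerivAt (w ∘ γ) (fderiv ℝ w (γ s) e) s := fun s hs =>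
    (hwd _ (hmaps (Ioo_subset_Ioc_self hs))).hasFDerivAt.comp_hasDerivAt s (hγ' s)
  have hγω : MapsTo γ (Icc c t) (closure ω) := fun s hs => by
    rcases hs.1.eq_or_lt with rfl | hcs
    · exact frontier_subset_closure hcω
    · exact subset_closure (hmaps ⟨hcs, hs.2⟩)
  have he' : ‖e‖ₑ ≤ 1 := by rw [← ofReal_norm]; exact ENNReal.ofReal_le_one.2 he
  calc ‖w (γ t)‖ₑ ^ p
      ≤ ENNReal.ofReal (t - c) ^ (p - 1) * ∫⁻ s in Ioo c t, ‖deriv (w ∘ γ) s‖ₑ ^ p :=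
        enorm_rpow_le_mul_lintegral_enorm_deriv_rpow hp hct
          (hwc.comp (by fun_prop) hγω) (fun s hs => (hderiv s hs).differentiableAt) (hw0 _ hcω)
    _ ≤ ENNReal.ofReal (t - c) ^ (p - 1) *
          ∫⁻ s in Ioo c t, ω.indicator (fun y => ‖fderiv ℝ w y‖ₑ ^ p) (γ s) := by
        gcongr 1
        refine setLIntegral_mono' measurableSet_Ioo fun s hs => ?_
        rw [(hderiv s hs).deriv, indicator_of_mem (hmaps (Ioo_subset_Ioc_self hs))]
        gcongr
        exact ((fderiv ℝ w (γ s)).le_opENorm e).trans (mul_le_of_le_one_right' he')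
    _ ≤ ENNReal.ofReal (b - a) ^ (p - 1) *
          ∫⁻ s in Ioo a b, ω.indicator (fun y => ‖fderiv ℝ w y‖ₑ ^ p) (γ s) := by
        gcongr

/-- `ℝ^{m+1} ≃ ℝ^m × ℝ`, the factor `ℝ` being the coordinate `0`. -/
def euclideanSplitZero (m : ℕ) : (Fin m → ℝ) × ℝ ≃ᵐ Ed (m + 1) :=
  (MeasurableEquiv.prodComm.trans (MeasurableEquiv.piFinSuccAbove (fun _ => ℝ) 0).symm).trans
    (MeasurableEquiv.toLp 2 _)

theorem measurePreserving_euclideanSplitZero (m : ℕ) :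
    MeasurePreserving (euclideanSplitZero m) :=
  (PiLp.volume_preserving_toLp _).comp
    ((volume_preserving_piFinSuccAbove (fun _ => ℝ) 0).symm.comp Measure.measurePreserving_swap)

theorem euclideanSplitZero_apply_zero {m : ℕ} (z : Fin m → ℝ) (s : ℝ) :
    euclideanSplitZero m (z, s) 0 = s := by
  simp [euclideanSplitZero, MeasurableEquiv.piFinSuccAbove_symm_apply, MeasurableEquiv.prodComm]

theorem euclideanSplitZero_eq_add_smul {m : ℕ} (z : Fin m → ℝ) (s : ℝ) :
    euclideanSplitZero m (z, s) =
      euclideanSplitZero m (z, 0) + s • EuclideanSpace.single 0 1 := by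
  ext i
  induction i using Fin.cases <;>
    simp [euclideanSplitZero, MeasurableEquiv.piFinSuccAbove_symm_apply, MeasurableEquiv.prodComm]

theorem lintegral_enorm_rpow_le_of_coord_zero_mem_Ioo {m : ℕ} {p a b : ℝ} (hp : 1 ≤ p)
    {ω : Set (Ed (m + 1))} (hω : IsOpen ω) (hωab : ∀ y ∈ ω, y 0 ∈ Ioo a b)
    {w : Ed (m + 1) → ℝ} (hwc : ContinuousOn w (closure ω))
    (hwd : ∀ y ∈ ω, DifferentiableAt ℝ w y) (hw0 : ∀ y ∈ frontier ω, w y = 0) :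
    ∫⁻ y in ω, ‖w y‖ₑ ^ p ≤ ENNReal.ofReal (b - a) ^ p * ∫⁻ y in ω, ‖fderiv ℝ w y‖ₑ ^ p := by
  set P := euclideanSplitZero m
  have hP := measurePreserving_euclideanSplitZero m
  set G := ω.indicator fun y => ‖fderiv ℝ w y‖ₑ ^ p
  have hG : Measurable G :=
    ((measurable_fderiv ℝ w).enorm.pow_const p).indicator hω.measurableSet
  set L : (Fin m → ℝ) → ℝ≥0∞ := fun z => ∫⁻ s in Ioo a b, G (P (z, s))
  have hline : ∀ z t, ω.indicator (fun y => ‖w y‖ₑ ^ p) (P (z, t)) ≤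
      (Ioo a b).indicator (fun _ => ENNReal.ofReal (b - a) ^ (p - 1) * L z) t := by
    intro z t
    by_cases ht : P (z, t) ∈ ω
    · have htab : t ∈ Ioo a b := euclideanSplitZero_apply_zero z t ▸ hωab _ ht
      have ha : P (z, a) ∉ ω := fun h =>
        (hωab _ h).1.ne (euclideanSplitZero_apply_zero z a).symm
      rw [indicator_of_mem ht, indicator_of_mem htab]
      rw [euclideanSplitZero_eq_add_smul] at ht ha
      simpa only [← euclideanSplitZero_eq_add_smul] using
        enorm_rpow_le_lintegral_fderiv_along_line hp hω hwc hwd hw0 (by simp) ha ht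
          htab.1.le htab.2.le
    · rw [indicator_of_notMem ht]
      exact bot_le
  calc ∫⁻ y in ω, ‖w y‖ₑ ^ p = ∫⁻ q, ω.indicator (fun y => ‖w y‖ₑ ^ p) (P q) := by
        rw [← lintegral_indicator hω.measurableSet, hP.lintegral_comp_emb P.measurableEmbedding]
    _ ≤ ∫⁻ z, ∫⁻ t, ω.indicator (fun y => ‖w y‖ₑ ^ p) (P (z, t)) := lintegral_prod_le _
    _ ≤ ∫⁻ z, ∫⁻ t,
          (Ioo a b).indicator (fun _ => ENNReal.ofReal (b - a) ^ (p - 1) * L z) t := by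
        gcongr with z t
        exact hline z t
    _ = ∫⁻ z, ENNReal.ofReal (b - a) ^ p * L z := by
        refine lintegral_congr fun z => ?_
        rw [lintegral_indicator_const measurableSet_Ioo, Real.volume_Ioo, mul_right_comm]
        conv_rhs => rw [← sub_add_cancel p 1,
          ENNReal.rpow_add_of_nonneg _ _ (by linarith) zero_le_one, ENNReal.rpow_one]
    _ ≤ ENNReal.ofReal (b - a) ^ p * ∫⁻ z, ∫⁻ s, G (P (z, s)) := by
        rw [lintegral_const_mul' _ _ (ENNReal.rpow_ne_top_of_nonneg (by linarith)
          ENNReal.ofReal_ne_top)]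
        gcongr
        exact setLIntegral_le_lintegral _ _
    _ = ENNReal.ofReal (b - a) ^ p * ∫⁻ y in ω, ‖fderiv ℝ w y‖ₑ ^ p := by
        rw [← lintegral_prod (fun q => G (P q)) (hG.comp P.measurable).aemeasurable,
          ← Measure.volume_eq_prod, hP.lintegral_comp_emb P.measurableEmbedding,
          lintegral_indicator hω.measurableSet]

theorem norm_fderiv_slice_le_vnorm_grad {d : ℕ} (u : ℝ × Ed d → ℝ) (x : ℝ × Ed d) :
    ‖fderiv ℝ (fun y => u (x.1, y)) x.2‖ ≤ vnorm (grad u x) := by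
  have h : ‖fderiv ℝ (fun y => u (x.1, y)) x.2‖ = ‖(grad u x).2‖ := by
    simp [grad, gradient]
  rw [h, vnorm]
  exact (le_abs_self _).trans (Real.abs_le_sqrt (le_add_of_nonneg_left (sq_nonneg _)))

theorem lintegral_enorm_rpow_le_on_cylinder {m : ℕ} {p a b : ℝ} (hp : 1 ≤ p) {U : Set ℝ}
    (hU : MeasurableSet U) {ω : Set (Ed (m + 1))} (hω : IsOpen ω)
    (hωab : ∀ y ∈ ω, y 0 ∈ Ioo a b) {u : ℝ × Ed (m + 1) → ℝ}
    (huc : ContinuousOn u (closure (U ×ˢ ω))) (hud : ∀ x ∈ U ×ˢ ω, DifferentiableAt ℝ u x)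
    (hu0 : ∀ x ∈ U ×ˢ frontier ω, u x = 0)
    (hgrad : AEMeasurable (fun x => ‖vnorm (grad u x)‖ₑ ^ p) (volume.restrict (U ×ˢ ω))) :
    ∫⁻ x in U ×ˢ ω, ‖u x‖ₑ ^ p ≤
      ENNReal.ofReal (b - a) ^ p * ∫⁻ x in U ×ˢ ω, ‖vnorm (grad u x)‖ₑ ^ p := by
  rw [Measure.volume_eq_prod, ← Measure.prod_restrict] at hgrad ⊢
  calc ∫⁻ x, ‖u x‖ₑ ^ p ∂(volume.restrict U).prod (volume.restrict ω)
      ≤ ∫⁻ t in U, ∫⁻ y in ω, ‖u (t, y)‖ₑ ^ p := lintegral_prod_le _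
    _ ≤ ∫⁻ t in U, ENNReal.ofReal (b - a) ^ p * ∫⁻ y in ω, ‖vnorm (grad u (t, y))‖ₑ ^ p := by
        refine setLIntegral_mono' hU fun t ht => ?_
        have hslice := lintegral_enorm_rpow_le_of_coord_zero_mem_Ioo hp hω hωab
          (w := fun y => u (t, y))
          (huc.comp (by fun_prop) fun y hy => by
            rw [closure_prod_eq]; exact ⟨subset_closure ht, hy⟩)
          (fun y hy => (hud (t, y) ⟨ht, hy⟩).comp y (by fun_prop))
          (fun y hy => hu0 (t, y) ⟨ht, hy⟩)
        refine hslice.trans ?_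
        gcongr with y
        exact enorm_le_iff_norm_le.2
          ((norm_fderiv_slice_le_vnorm_grad u (t, y)).trans (le_abs_self _))
    _ = ENNReal.ofReal (b - a) ^ p *
          ∫⁻ x, ‖vnorm (grad u x)‖ₑ ^ p ∂(volume.restrict U).prod (volume.restrict ω) := by
        rw [lintegral_const_mul' _ _ (ENNReal.rpow_ne_top_of_nonneg (by linarith)
          ENNReal.ofReal_ne_top), lintegral_prod _ hgrad]

theorem rpow_integral_norm_rpow_le_of_lintegral_le {α E F : Type*} [MeasurableSpace α]
    {μ : Measure α} [NormedAddCommGroup E] [NormedAddCommGroup F] {p C : ℝ} (hp : 0 < p)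
    (hC : 0 ≤ C) {f : α → E} {g : α → F} (hf : MemLp f (ENNReal.ofReal p) μ)
    (hg : MemLp g (ENNReal.ofReal p) μ)
    (h : ∫⁻ x, ‖f x‖ₑ ^ p ∂μ ≤ ENNReal.ofReal C ^ p * ∫⁻ x, ‖g x‖ₑ ^ p ∂μ) :
    (∫ x, ‖f x‖ ^ p ∂μ) ^ (1 / p) ≤ C * (∫ x, ‖g x‖ ^ p ∂μ) ^ (1 / p) := by
  have hp0 : ENNReal.ofReal p ≠ 0 := by simpa using hp
  have key : eLpNorm f (ENNReal.ofReal p) μ ≤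
      ENNReal.ofReal C * eLpNorm g (ENNReal.ofReal p) μ := by
    rw [eLpNorm_eq_lintegral_rpow_enorm_toReal hp0 ENNReal.ofReal_ne_top,
      eLpNorm_eq_lintegral_rpow_enorm_toReal hp0 ENNReal.ofReal_ne_top,
      ENNReal.toReal_ofReal hp.le]
    calc (∫⁻ x, ‖f x‖ₑ ^ p ∂μ) ^ (1 / p)
        ≤ (ENNReal.ofReal C ^ p * ∫⁻ x, ‖g x‖ₑ ^ p ∂μ) ^ (1 / p) := by gcongr
      _ = ENNReal.ofReal C * (∫⁻ x, ‖g x‖ₑ ^ p ∂μ) ^ (1 / p) := by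
        rw [ENNReal.mul_rpow_of_nonneg _ _ (by positivity), ← ENNReal.rpow_mul,
          mul_one_div_cancel hp.ne', ENNReal.rpow_one]
  rw [hf.eLpNorm_eq_integral_rpow_norm hp0 ENNReal.ofReal_ne_top,
    hg.eLpNorm_eq_integral_rpow_norm hp0 ENNReal.ofReal_ne_top, ENNReal.toReal_ofReal hp.le,
    ← ENNReal.ofReal_mul hC, ENNReal.ofReal_le_ofReal_iff (by positivity)] at key
  simpa only [one_div] using key

theorem poincare_inequality_on_cylinder_general
    (d : ℕ) (hd : 1 ≤ d) (p : ℝ) (hp₁ : 1 < p)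
    (ω : Set (Ed d)) (hω : IsOpen ω) (hωbd : Bornology.IsBounded ω) :
    ∃ C : ℝ, 0 < C ∧ ∀ U : Set ℝ, IsOpen U → ∀ u : ℝ × Ed d → ℝ,
      MemV p (U ×ˢ ω) (U ×ˢ frontier ω) u →
      (∫ x in U ×ˢ ω, |u x| ^ p) ^ (1 / p) ≤
        C * (∫ x in U ×ˢ ω, vnorm (grad u x) ^ p) ^ (1 / p) := by
  obtain ⟨m, rfl⟩ : ∃ m, d = m + 1 := ⟨d - 1, by omega⟩
  obtain ⟨R, hR, hωR⟩ := hωbd.subset_ball_lt 0 0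
  have hωR' : ∀ y ∈ ω, y 0 ∈ Ioo (-R) R := fun y hy =>
    abs_lt.1 ((PiLp.norm_apply_le y 0).trans_lt (mem_ball_zero_iff.1 (hωR hy)))
  refine ⟨2 * R, by positivity, fun U hU u ⟨⟨huc, hud, huLp, hgLp⟩, hu0⟩ => ?_⟩
  have key := lintegral_enorm_rpow_le_on_cylinder hp₁.le hU.measurableSet hω hωR' huc hud hu0
    (hgLp.1.enorm.pow_const p)
  rw [show R - -R = 2 * R by ring] at key
  have hvnorm : ∀ x, |vnorm (grad u x)| = vnorm (grad u x) := fun x =>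
    abs_of_nonneg (Real.sqrt_nonneg _)
  simpa only [Real.norm_eq_abs, hvnorm] using
    rpow_integral_norm_rpow_le_of_lintegral_le (by linarith) (by positivity) huLp hgLp key

/-- Lemma 2.3 of the paper: Poincaré inequality on the cylinder `U × ω`,
with a constant depending only on `p` and `ω` (independent of `U`). -/
theorem poincare_inequality_on_cylinder
    (d : ℕ) (hd : 1 ≤ d) (p : ℝ) (hp₁ : 1 < p)
    (ω : Set (Ed d)) (hω : IsOpen ω) (hωbd : Bornology.IsBounded ω) (hωne : ω.Nonempty) :
    ∃ C : ℝ, 0 < C ∧ ∀ U : Set ℝ, IsOpen U → ∀ u : ℝ × Ed d → ℝ,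
      MemV p (U ×ˢ ω) (U ×ˢ frontier ω) u →
      (∫ x in U ×ˢ ω, |u x| ^ p) ^ (1 / p) ≤
        C * (∫ x in U ×ˢ ω, vnorm (grad u x) ^ p) ^ (1 / p) :=
  poincare_inequality_on_cylinder_general d hd p hp₁ ω hω hωbd
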